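/- arXiv:2407.02658 — 4 statements merged into one kernel-verified Lean document; each statement's English description precedes it below -/
import Mathlib

section
/- Every chordal graph (a simple graph in which every cycle of length at least four has a chord) contains a simplicial vertex, i.e., a vertex whose closed neighborhood induces a complete graph. Moreover, if the chordal graph is not complete, it contains two non-adjacent simplicial vertices. -/
/-!
Dirac's argument, by induction on the number of vertices. If `G` is not complete, pick
non-adjacent `a`, `b` and a minimal set `S` separating them. Every vertex of `S` has a neighbour
in the component `A` of `a` and in the component `B` of `b` of `G - S`. Two non-adjacent
`s, t ∈ S` could then be joined by shortest paths through `A` and through `B`. Together these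
paths form a cycle of length at least four, and no chord can exist: a chord within one path
contradicts its minimality, and there are no edges between `A` and `B`. Hence `S` is a clique.
The graph induced on `A ∪ S` is chordal and smaller, so it is complete or has two non-adjacent
simplicial vertices. Since `S` is a clique, in either case one of them lies in `A`. Its
neighbourhood lies in `A ∪ S`, so it is simplicial in `G`. The same on the side of `b` gives a
second simplicial vertex, not adjacent to the first.
-/

/-- A cycle has a chord: two vertices on the cycle adjacent in `G`,
whose edge is not an edge of the cycle. -/
def HasChord {V : Type*} (G : SimpleGraph V) {v : V} (c : G.Walk v v) : Prop :=
  ∃ x y, G.Adj x y ∧ x ∈ c.support ∧ y ∈ c.support ∧ s(x, y) ∉ c.edges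

/-- A graph is chordal if every cycle of length at least 4 has a chord. -/
def Chordal {V : Type*} (G : SimpleGraph V) : Prop :=
  ∀ (v : V) (c : G.Walk v v), c.IsCycle → 4 ≤ c.length → HasChord G c

/-- A vertex is simplicial if its closed neighbourhood induces a complete graph. -/
def Simplicial {V : Type*} (G : SimpleGraph V) (v : V) : Prop :=
  ∀ x ∈ insert v (G.neighborSet v), ∀ y ∈ insert v (G.neighborSet v), x ≠ y → G.Adj x y

open SimpleGraph

section

variable {V W : Type*} {G : SimpleGraph V}

namespace SimpleGraph.Walk

variable {u v : V}

lemma two_le_length_of_not_adj {p : G.Walk u v} (huv : u ≠ v) (h : ¬ G.Adj u v) :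
    2 ≤ p.length := by
  by_contra! hlt
  interval_cases hp : p.length
  · exact huv (p.eq_of_length_eq_zero hp)
  · exact h (p.adj_of_length_eq_one hp)

lemma exists_length_lt_cons_of_adj [DecidableEq V] {c y : V} (h : G.Adj u c)
    (p : G.Walk c v) (hy : y ∈ p.support) (hyc : y ≠ c) (huy : G.Adj u y) :
    ∃ q : G.Walk u v, q.length < (cons h p).length ∧ q.support ⊆ (cons h p).support := by
  refine ⟨cons huy (p.dropUntil y hy), ?_, ?_⟩
  · simpa using length_dropUntil_lt_length hy hyc
  · simpa using List.cons_subset_cons u (p.support_dropUntil_subset_support hy)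

lemma exists_length_lt_of_isChord [DecidableEq V] {p : G.Walk u v} {e : Sym2 V}
    (he : p.IsChord e) : ∃ q : G.Walk u v, q.length < p.length ∧ q.support ⊆ p.support := by
  induction e using Sym2.ind with | _ x y => ?_
  rw [isChord_sym2Mk] at he
  obtain ⟨hxy, hxyp, hx, hy⟩ := he
  induction p with
  | nil => simp_all
  | @cons u c v h p ih =>
    rw [edges_cons, List.mem_cons, not_or] at hxyp
    rw [support_cons, List.mem_cons] at hx hy
    rcases hx with rfl | hx
    · refine exists_length_lt_cons_of_adj h p (hy.resolve_left hxy.ne') ?_ hxy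
      rintro rfl
      exact hxyp.1 rfl
    rcases hy with rfl | hy
    · refine exists_length_lt_cons_of_adj h p hx ?_ hxy.symm
      rintro rfl
      exact hxyp.1 Sym2.eq_swap
    obtain ⟨q, hlt, hsub⟩ := ih hxyp.2 hx hy
    exact ⟨cons h q, by simpa using hlt, by simpa using List.cons_subset_cons _ hsub⟩

lemma exists_isPath_isChordless_support_subset {X : Set V} (p : G.Walk u v)
    (hp : ∀ x ∈ p.support, x ∈ X) :
    ∃ q : G.Walk u v, q.IsPath ∧ q.IsChordless ∧ ∀ x ∈ q.support, x ∈ X := by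
  classical
  obtain ⟨q, hqX, hmin⟩ :=
    exists_minimalFor_of_wellFoundedLT (fun q : G.Walk u v ↦ ∀ x ∈ q.support, x ∈ X) length ⟨p, hp⟩
  refine ⟨q.bypass, q.bypass_isPath, fun e he ↦ ?_,
    fun x hx ↦ hqX x (q.support_bypass_subset_support hx)⟩
  obtain ⟨r, hlt, hsub⟩ := exists_length_lt_of_isChord he
  have := hmin (fun x hx ↦ hqX x (q.support_bypass_subset_support (hsub hx)))
    (hlt.le.trans q.length_bypass_le_length)
  have := q.length_bypass_le_length
  omega

lemma IsPath.isCycle_append_reverse {p q : G.Walk u v} (hp : p.IsPath) (hq : q.IsPath)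
    (hpq : ∀ z ∈ p.support, z ∈ q.support → z = u ∨ z = v) (hlen : 2 ≤ p.length) :
    (p.append q.reverse).IsCycle := by
  refine hp.isCycle_append hq.reverse (fun z hzp hzq ↦ ?_) (.inl hlen)
  have hzu : z ≠ u := by
    rintro rfl
    exact (List.nodup_cons.mp (p.cons_tail_support ▸ hp.support_nodup)).1 hzp
  have hzv : z ≠ v := by
    rintro rfl
    exact (List.nodup_cons.mp (q.reverse.cons_tail_support ▸ hq.reverse.support_nodup)).1 hzq
  rw [support_reverse] at hzq
  obtain rfl | rfl :=
    hpq z (List.mem_of_mem_tail hzp) (List.mem_reverse.mp (List.mem_of_mem_tail hzq))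
  exacts [hzu rfl, hzv rfl]

end SimpleGraph.Walk

lemma Chordal.comap {H : SimpleGraph W} (hG : Chordal G) (f : H ↪g G) : Chordal H := by
  intro v c hc hlen
  obtain ⟨x, y, hxy, hx, hy, he⟩ :=
    hG (f v) (c.map f.toHom) (hc.map f.injective) (by rwa [Walk.length_map])
  rw [Walk.support_map, List.mem_map] at hx hy
  obtain ⟨x, hx, rfl⟩ := hx
  obtain ⟨y, hy, rfl⟩ := hy
  refine ⟨x, y, f.map_adj_iff.mp hxy, hx, hy, fun hxyc ↦ he ?_⟩
  rw [Walk.edges_map]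
  exact List.mem_map_of_mem hxyc

lemma Chordal.induce (hG : Chordal G) (U : Set V) : Chordal (G.induce U) :=
  hG.comap (Embedding.induce U)

/-- Chordless paths from `s` to `t` through `X` and through `Y` close up to a cycle of length at
least four whose only possible chord is `s(s, t)`. -/
lemma Chordal.adj_of_walks_of_forall_not_adj (hG : Chordal G) {X Y : Set V} (hXY : Disjoint X Y)
    (hnadj : ∀ x ∈ X, ∀ y ∈ Y, ¬ G.Adj x y) {s t : V} (hst : s ≠ t)
    (p : G.Walk s t) (hp : ∀ x ∈ p.support, x ∈ insert s (insert t X))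
    (q : G.Walk s t) (hq : ∀ y ∈ q.support, y ∈ insert s (insert t Y)) : G.Adj s t := by
  by_contra hadj
  obtain ⟨P, hPpath, hPchord, hPX⟩ := p.exists_isPath_isChordless_support_subset hp
  obtain ⟨Q, hQpath, hQchord, hQY⟩ := q.exists_isPath_isChordless_support_subset hq
  have hX : ∀ x ∈ P.support, x ∉ Q.support → x ∈ X := fun x hxP hxQ ↦ by
    rcases hPX x hxP with rfl | rfl | hx
    exacts [(hxQ Q.start_mem_support).elim, (hxQ Q.end_mem_support).elim, hx]
  have hY : ∀ y ∈ Q.support, y ∉ P.support → y ∈ Y := fun y hyQ hyP ↦ by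
    rcases hQY y hyQ with rfl | rfl | hy
    exacts [(hyP P.start_mem_support).elim, (hyP P.end_mem_support).elim, hy]
  have hPlen := P.two_le_length_of_not_adj hst hadj
  have hQlen := Q.two_le_length_of_not_adj hst hadj
  have hcycle : (P.append Q.reverse).IsCycle := by
    refine hPpath.isCycle_append_reverse hQpath (fun z hzP hzQ ↦ ?_) hPlen
    by_contra! hz
    have hzX := hPX z hzP
    have hzY := hQY z hzQ
    simp only [Set.mem_insert_iff, hz.1, hz.2, false_or] at hzX hzY
    exact hXY.notMem_of_mem_left hzX hzY
  obtain ⟨x, y, hxy, hx, hy, he⟩ := hG s _ hcycle (by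
    simp only [Walk.length_append, Walk.length_reverse]
    omega)
  simp only [Walk.mem_support_append_iff, Walk.support_reverse, List.mem_reverse] at hx hy
  simp only [Walk.edges_append, Walk.edges_reverse, List.mem_append, List.mem_reverse,
    not_or] at he
  have hmixed : ∀ x y, G.Adj x y → x ∈ P.support → y ∈ Q.support → s(x, y) ∉ P.edges →
      s(x, y) ∉ Q.edges → False := fun x y hxy hxP hyQ hP hQ ↦ by
    by_cases hxQ : x ∈ Q.support
    · exact hQ (hQchord.mem_edges hxQ hyQ hxy)
    by_cases hyP : y ∈ P.support
    · exact hP (hPchord.mem_edges hxP hyP hxy)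
    exact hnadj x (hX x hxP hxQ) y (hY y hyQ hyP) hxy
  rcases hx with hx | hx <;> rcases hy with hy | hy
  · exact he.1 (hPchord.mem_edges hx hy hxy)
  · exact hmixed x y hxy hx hy he.1 he.2
  · exact hmixed y x hxy.symm hy hx (Sym2.eq_swap ▸ he.1) (Sym2.eq_swap ▸ he.2)
  · exact he.2 (hQchord.mem_edges hx hy hxy)

namespace SimpleGraph

def ReachableAvoiding (G : SimpleGraph V) (S : Set V) (u v : V) : Prop :=
  ∃ w : G.Walk u v, ∀ x ∈ w.support, x ∉ S

def Separates (G : SimpleGraph V) (S : Set V) (a b : V) : Prop :=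
  a ∉ S ∧ b ∉ S ∧ ¬ G.ReachableAvoiding S a b

def IsMinimalSeparator (G : SimpleGraph V) (S : Set V) (a b : V) : Prop :=
  Minimal (G.Separates · a b) S

variable {S : Set V} {a b u v w : V}

namespace ReachableAvoiding

lemma refl (hu : u ∉ S) : G.ReachableAvoiding S u u :=
  ⟨.nil, by simpa⟩

lemma right_notMem (h : G.ReachableAvoiding S u v) : v ∉ S :=
  h.elim fun w hw ↦ hw v w.end_mem_support

lemma symm (h : G.ReachableAvoiding S u v) : G.ReachableAvoiding S v u :=
  h.elim fun w hw ↦ ⟨w.reverse, by simpa using hw⟩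

lemma trans (huv : G.ReachableAvoiding S u v) (hvw : G.ReachableAvoiding S v w) :
    G.ReachableAvoiding S u w := by
  obtain ⟨p, hp⟩ := huv
  obtain ⟨q, hq⟩ := hvw
  refine ⟨p.append q, fun x hx ↦ ?_⟩
  rcases (Walk.mem_support_append_iff p q).mp hx with hx | hx
  exacts [hp x hx, hq x hx]

lemma of_adj (h : G.Adj u v) (hu : u ∉ S) (hv : v ∉ S) : G.ReachableAvoiding S u v :=
  ⟨h.toWalk, by simp [hu, hv]⟩

lemma of_mem_support [DecidableEq V] (p : G.Walk u v) (hp : ∀ x ∈ p.support, x ∉ S)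
    (hw : w ∈ p.support) : G.ReachableAvoiding S u w :=
  ⟨p.takeUntil w hw, fun x hx ↦ hp x (p.support_takeUntil_subset_support hw hx)⟩

lemma exists_walk_of_adj {z₁ z₂ s t : V} (h₁ : G.ReachableAvoiding S a z₁) (hs : G.Adj z₁ s)
    (h₂ : G.ReachableAvoiding S a z₂) (ht : G.Adj z₂ t) :
    ∃ p : G.Walk s t, ∀ x ∈ p.support, x ∈ insert s (insert t {v | G.ReachableAvoiding S a v}) := by
  classical
  obtain ⟨w, hw⟩ := h₁.symm.trans h₂
  refine ⟨.cons hs.symm (w.concat ht), fun x hx ↦ ?_⟩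
  simp only [Walk.support_cons, Walk.support_concat, List.mem_cons, List.mem_append,
    List.not_mem_nil, or_false] at hx
  rcases hx with rfl | hx | rfl
  · exact .inl rfl
  · exact .inr (.inr (h₁.trans (.of_mem_support w hw hx)))
  · exact .inr (.inl rfl)

end ReachableAvoiding

/-- The predecessor `z` of the first vertex `y` of `p` in `S`. -/
lemma Walk.exists_reachableAvoiding_adj (p : G.Walk u v) (hu : u ∉ S)
    (hp : ∃ x ∈ p.support, x ∈ S) :
    ∃ y ∈ p.support, y ∈ S ∧ ∃ z, G.ReachableAvoiding S u z ∧ G.Adj z y := by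
  induction p with
  | nil => simp_all
  | @cons u c v h p ih =>
    by_cases hc : c ∈ S
    · exact ⟨c, by simp, hc, u, .refl hu, h⟩
    obtain ⟨x, hx, hxS⟩ := hp
    rw [Walk.support_cons, List.mem_cons] at hx
    obtain ⟨y, hy, hyS, z, hz, hzy⟩ :=
      ih hc ⟨x, hx.resolve_left (by rintro rfl; exact hu hxS), hxS⟩
    exact ⟨y, by simp [hy], hyS, z, (ReachableAvoiding.of_adj h hu hc).trans hz, hzy⟩

namespace Separates

lemma symm (h : G.Separates S a b) : G.Separates S b a :=
  ⟨h.2.1, h.1, fun hba ↦ h.2.2 hba.symm⟩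

lemma ne_of_reachableAvoiding (h : G.Separates S a b) (hu : G.ReachableAvoiding S a u)
    (hv : G.ReachableAvoiding S b v) : u ≠ v := by
  rintro rfl
  exact h.2.2 (hu.trans hv.symm)

lemma not_adj_of_reachableAvoiding (h : G.Separates S a b) (hu : G.ReachableAvoiding S a u)
    (hv : G.ReachableAvoiding S b v) : ¬ G.Adj u v := fun huv ↦
  h.2.2 ((hu.trans (.of_adj huv hu.right_notMem hv.right_notMem)).trans hv.symm)

lemma compl_pair (hab : a ≠ b) (h : ¬ G.Adj a b) : G.Separates {a, b}ᶜ a b := by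
  refine ⟨by simp, by simp, fun ⟨w, hw⟩ ↦ ?_⟩
  cases w with
  | nil => exact hab rfl
  | @cons _ c _ hac w =>
    have : c ≠ a → c = b := by simpa using hw c (by simp)
    exact h (this hac.ne' ▸ hac)

end Separates

lemma exists_isMinimalSeparator [Finite V] (hab : a ≠ b) (h : ¬ G.Adj a b) :
    ∃ S, G.IsMinimalSeparator S a b :=
  exists_minimal_of_wellFoundedLT _ ⟨_, .compl_pair hab h⟩

namespace IsMinimalSeparator

lemma symm (h : G.IsMinimalSeparator S a b) : G.IsMinimalSeparator S b a :=
  h.mono (fun _ hT ↦ hT.symm) h.prop.symm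

lemma exists_adj (h : G.IsMinimalSeparator S a b) {s : V} (hs : s ∈ S) :
    ∃ z, G.ReachableAvoiding S a z ∧ G.Adj z s := by
  obtain ⟨w, hw⟩ : G.ReachableAvoiding (S \ {s}) a b := by
    by_contra hab
    exact h.not_prop_of_lt (Set.sdiff_singleton_ssubset.mpr hs)
      ⟨fun ha ↦ h.prop.1 ha.1, fun hb ↦ h.prop.2.1 hb.1, hab⟩
  have hmeet : ∃ x ∈ w.support, x ∈ S := by
    by_contra! hw'
    exact h.prop.2.2 ⟨w, hw'⟩
  obtain ⟨y, hy, hyS, z, hz, hzy⟩ := w.exists_reachableAvoiding_adj h.prop.1 hmeet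
  obtain rfl : y = s := by
    by_contra hys
    exact hw y hy ⟨hyS, hys⟩
  exact ⟨z, hz, hzy⟩

end IsMinimalSeparator

end SimpleGraph

variable {S : Set V} {a b : V}

theorem Chordal.isClique_of_isMinimalSeparator (hG : Chordal G)
    (h : G.IsMinimalSeparator S a b) : G.IsClique S := by
  intro s hs t ht hst
  obtain ⟨za₁, hza₁, hza₁s⟩ := h.exists_adj hs
  obtain ⟨za₂, hza₂, hza₂t⟩ := h.exists_adj ht
  obtain ⟨zb₁, hzb₁, hzb₁s⟩ := h.symm.exists_adj hs
  obtain ⟨zb₂, hzb₂, hzb₂t⟩ := h.symm.exists_adj ht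
  obtain ⟨p, hp⟩ := hza₁.exists_walk_of_adj hza₁s hza₂ hza₂t
  obtain ⟨q, hq⟩ := hzb₁.exists_walk_of_adj hzb₁s hzb₂ hzb₂t
  refine hG.adj_of_walks_of_forall_not_adj ?_ (fun x hx y hy ↦ ?_) hst p hp q hq
  · exact Set.disjoint_left.mpr fun v hva hvb ↦ h.prop.ne_of_reachableAvoiding hva hvb rfl
  · exact h.prop.not_adj_of_reachableAvoiding hx hy

lemma simplicial_top (v : V) : Simplicial ⊤ v :=
  fun _ _ _ _ hxy ↦ hxy

lemma Simplicial.of_induce {U : Set V} {u : U} (h : Simplicial (G.induce U) u)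
    (hN : G.neighborSet u ⊆ U) : Simplicial G u := by
  have hU : insert (u : V) (G.neighborSet u) ⊆ U := Set.insert_subset u.2 hN
  intro x hx y hy hxy
  refine h ⟨x, hU hx⟩ ?_ ⟨y, hU hy⟩ ?_ (fun h ↦ hxy (congrArg Subtype.val h))
  · rcases hx with rfl | hx
    exacts [.inl rfl, .inr hx]
  · rcases hy with rfl | hy
    exacts [.inl rfl, .inr hy]

lemma Chordal.exists_simplicial_reachableAvoiding (hG : Chordal G)
    (h : G.IsMinimalSeparator S a b)
    (ih : G.induce ({v | G.ReachableAvoiding S a v} ∪ S) ≠ ⊤ → ∃ u v, u ≠ v ∧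
      ¬ (G.induce ({v | G.ReachableAvoiding S a v} ∪ S)).Adj u v ∧
      Simplicial (G.induce ({v | G.ReachableAvoiding S a v} ∪ S)) u ∧
      Simplicial (G.induce ({v | G.ReachableAvoiding S a v} ∪ S)) v) :
    ∃ u, G.ReachableAvoiding S a u ∧ Simplicial G u := by
  set U := {v | G.ReachableAvoiding S a v} ∪ S
  have hN {u : V} (hu : G.ReachableAvoiding S a u) : G.neighborSet u ⊆ U := fun x hx ↦ by
    by_cases hxS : x ∈ S
    exacts [.inr hxS, .inl (hu.trans (.of_adj hx hu.right_notMem hxS))]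
  obtain ⟨u, hu, hsimp⟩ : ∃ u : U, G.ReachableAvoiding S a u ∧ Simplicial (G.induce U) u := by
    by_cases htop : G.induce U = ⊤
    · have ha : G.ReachableAvoiding S a a := .refl h.prop.1
      exact ⟨⟨a, .inl ha⟩, ha, htop ▸ simplicial_top _⟩
    obtain ⟨u, v, huv, hnadj, hu, hv⟩ := ih htop
    by_cases hua : G.ReachableAvoiding S a u
    · exact ⟨u, hua, hu⟩
    by_cases hva : G.ReachableAvoiding S a v
    · exact ⟨v, hva, hv⟩
    exact absurd (hG.isClique_of_isMinimalSeparator h (u.2.resolve_left hua)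
      (v.2.resolve_left hva) (Subtype.val_injective.ne huv)) hnadj
  exact ⟨u, hu, hsimp.of_induce (hN hu)⟩

theorem Chordal.exists_simplicial_not_adj [Finite V] (hG : Chordal G) (hne : G ≠ ⊤) :
    ∃ u v, u ≠ v ∧ ¬ G.Adj u v ∧ Simplicial G u ∧ Simplicial G v := by
  induction hn : Nat.card V using Nat.strong_induction_on generalizing V with | _ n ih => ?_
  obtain ⟨a, b, hab, hnadj⟩ := ne_top_iff_exists_not_adj.mp hne
  obtain ⟨S, hS⟩ := exists_isMinimalSeparator hab hnadj
  have side {a b : V} (hS : G.IsMinimalSeparator S a b) :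
      ∃ u, G.ReachableAvoiding S a u ∧ Simplicial G u := by
    refine hG.exists_simplicial_reachableAvoiding hS fun hU ↦ ih _ ?_ (hG.induce _) hU rfl
    exact hn ▸ Finite.card_subtype_lt (x := b) fun hb ↦ hb.elim hS.prop.2.2 hS.prop.2.1
  obtain ⟨u, hu, hsu⟩ := side hS
  obtain ⟨v, hv, hsv⟩ := side hS.symm
  exact ⟨u, v, hS.prop.ne_of_reachableAvoiding hu hv,
    hS.prop.not_adj_of_reachableAvoiding hu hv, hsu, hsv⟩

end

/-- Dirac's lemma: every (finite, nonempty) chordal graph has a simplicial vertex;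
moreover, if it is not complete, it has two non-adjacent simplicial vertices. -/
theorem chordal_has_simplicial {V : Type*} [Fintype V] [Nonempty V]
    (G : SimpleGraph V) (hG : Chordal G) :
    (∃ v, Simplicial G v) ∧
      ((¬ ∀ x y : V, x ≠ y → G.Adj x y) →
        ∃ u v, u ≠ v ∧ ¬ G.Adj u v ∧ Simplicial G u ∧ Simplicial G v) := by
  by_cases hcomplete : ∀ x y : V, x ≠ y → G.Adj x y
  · exact ⟨⟨Classical.arbitrary V, fun x _ y _ ↦ hcomplete x y⟩, fun h ↦ (h hcomplete).elim⟩
  have hne : G ≠ ⊤ := fun htop ↦ hcomplete fun x y hxy ↦ htop ▸ hxy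
  obtain ⟨u, v, huv⟩ := hG.exists_simplicial_not_adj hne
  exact ⟨⟨u, huv.2.2.1⟩, fun _ ↦ ⟨u, v, huv⟩⟩
end

section
/- An orthogonal polygon without holes that has at most k knobs and no non-knob convex vertex has at most 4k − 4 vertices. -/
/-!
Every convex vertex is the first or the second endpoint of a knob, so there are at most
`2k` convex vertices. The polygon has `c - 4` concave and `c` convex vertices, hence
`n = 2c - 4 ≤ 4k - 4`.
-/

open Finset

theorem card_filter_le_two_mul_card_filter_and_add {G : Type*} [AddGroup G] [Fintype G]
    [DecidableEq G] (p : G → Prop) [DecidablePred p] (a : G)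
    (hp : ∀ i, p i → p (i + a) ∨ p (i - a)) :
    #{i | p i} ≤ 2 * #{i | p i ∧ p (i + a)} := by
  set pairs : Finset G := {i | p i ∧ p (i + a)}
  have hcover : ({i | p i} : Finset G) ⊆ pairs ∪ pairs.map (addRightEmbedding a) := by
    intro i hi
    simp only [pairs, mem_filter, mem_univ, true_and, mem_union, mem_map,
      addRightEmbedding_apply] at hi ⊢
    rcases hp i hi with hnext | hprev
    · exact .inl ⟨hi, hnext⟩
    · exact .inr ⟨i - a, ⟨hprev, by rwa [sub_add_cancel]⟩, sub_add_cancel i a⟩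
  calc #{i | p i} ≤ #(pairs ∪ pairs.map (addRightEmbedding a)) := card_le_card hcover
    _ ≤ #pairs + #(pairs.map (addRightEmbedding a)) := card_union_le _ _
    _ = #pairs + #pairs := by rw [card_map]
    _ = 2 * #pairs := (two_mul _).symm

/-- An orthogonal polygon without holes with vertices `0, 1, …, n-1` in cyclic order,
where `conv i` records whether vertex `i` is convex.  The edge `(i, i+1)` is a knob
iff both endpoints are convex.  In an orthogonal polygon without holes the number of
concave vertices is the number of convex vertices minus 4 (`hcount`).  If there are
at most `k` knobs and there is no non-knob convex vertex (every convex vertex is an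
endpoint of a knob, `hnonknob`), then the polygon has at most `4k - 4` vertices. -/
theorem vertices_le_of_no_nonknob (n k : ℕ) [NeZero n] (conv : Fin n → Bool)
    (hcount : (Finset.univ.filter fun i => conv i = false).card + 4 =
      (Finset.univ.filter fun i => conv i = true).card)
    (hknobs : (Finset.univ.filter fun i => conv i = true ∧ conv (i + 1) = true).card ≤ k)
    (hnonknob : ∀ i, conv i = true → conv (i + 1) = true ∨ conv (i - 1) = true) :
    n ≤ 4 * k - 4 := by
  have hconvex := card_filter_le_two_mul_card_filter_and_add (fun i => conv i = true) 1 hnonknob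
  have htotal : #{i | conv i = false} + #{i | conv i = true} = n := by
    simpa [add_comm] using card_filter_add_card_filter_not (s := univ) (fun i => conv i = true)
  omega
end

section
/- Let G(P) be the associated graph of an orthogonal polygon P, whose nodes are the unit lattice blocks inside P, with two blocks adjacent iff some axis-parallel square contained in P covers both. Then a set A of blocks can be simultaneously covered by a single axis-parallel square contained in P if and only if A induces a clique in G(P). -/
open Set

abbrev Pt := ℝ × ℝ

/-- The axis-parallel square with bottom-left corner `c` and side length `d`. -/
def sqSet (c : Pt) (d : ℝ) : Set Pt := Set.Icc c.1 (c.1 + d) ×ˢ Set.Icc c.2 (c.2 + d)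

/-- An orthogonal polygon: a closed bounded region whose boundary is the closed
polygonal curve through the `n` distinct vertices `v 0, …, v (n-1)` (in cyclic
order), all of whose edges are axis-parallel. -/
structure OrthoPoly (n : ℕ) [NeZero n] where
  P : Set Pt
  v : Fin n → Pt
  closed : IsClosed P
  bounded : Bornology.IsBounded P
  inj : Function.Injective v
  axisParallel : ∀ i : Fin n, (v i).1 = (v (i + 1)).1 ∨ (v i).2 = (v (i + 1)).2
  frontier_eq : frontier P = ⋃ i : Fin n, segment ℝ (v i) (v (i + 1))

/-- The block (unit lattice square) with bottom-left lattice corner `b`. -/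
def blockSet (b : ℤ × ℤ) : Set Pt := sqSet ((b.1 : ℝ), (b.2 : ℝ)) 1

lemma mem_sqSet {c : Pt} {d : ℝ} {p : Pt} :
    p ∈ sqSet c d ↔ (c.1 ≤ p.1 ∧ p.1 ≤ c.1 + d) ∧ (c.2 ≤ p.2 ∧ p.2 ≤ c.2 + d) := by
  simp only [sqSet, Set.mem_prod, Set.mem_Icc]

lemma mem_sqSet' {u v d : ℝ} {p : Pt} :
    p ∈ sqSet (u, v) d ↔ (u ≤ p.1 ∧ p.1 ≤ u + d) ∧ (v ≤ p.2 ∧ p.2 ≤ v + d) := by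
  simp only [sqSet, Set.mem_prod, Set.mem_Icc]

lemma block_subset_sqSet_iff {b : ℤ × ℤ} {c : Pt} {d : ℝ} :
    blockSet b ⊆ sqSet c d ↔
      c.1 ≤ (b.1 : ℝ) ∧ (b.1 : ℝ) + 1 ≤ c.1 + d ∧ c.2 ≤ (b.2 : ℝ) ∧ (b.2 : ℝ) + 1 ≤ c.2 + d := by
  constructor
  · intro h
    have h1 : ((b.1 : ℝ), (b.2 : ℝ)) ∈ blockSet b := by
      rw [blockSet, mem_sqSet']
      norm_num
    have h2 : ((b.1 : ℝ) + 1, (b.2 : ℝ) + 1) ∈ blockSet b := by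
      rw [blockSet, mem_sqSet']
      norm_num
    have g1 := mem_sqSet.mp (h h1)
    have g2 := mem_sqSet.mp (h h2)
    exact ⟨g1.1.1, g2.1.2, g1.2.1, g2.2.2⟩
  · rintro ⟨h1, h2, h3, h4⟩ p hp
    rw [blockSet, mem_sqSet'] at hp
    obtain ⟨⟨hp1, hp2⟩, hp3, hp4⟩ := hp
    exact mem_sqSet.mpr ⟨⟨le_trans h1 hp1, le_trans hp2 h2⟩,
      le_trans h3 hp3, le_trans hp4 h4⟩

lemma block_subset_sqSet_iff' {b : ℤ × ℤ} {u v d : ℝ} :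
    blockSet b ⊆ sqSet (u, v) d ↔
      u ≤ (b.1 : ℝ) ∧ (b.1 : ℝ) + 1 ≤ u + d ∧ v ≤ (b.2 : ℝ) ∧ (b.2 : ℝ) + 1 ≤ v + d :=
  block_subset_sqSet_iff

lemma mem_sqSet_swap {c : Pt} {d : ℝ} {p : Pt} :
    p ∈ sqSet (Prod.swap c) d ↔ Prod.swap p ∈ sqSet c d := by
  simp only [mem_sqSet, Prod.fst_swap, Prod.snd_swap]
  tauto

lemma sqSet_swap_subset {c : Pt} {d : ℝ} {P : Set Pt} :
    sqSet (Prod.swap c) d ⊆ Prod.swap ⁻¹' P ↔ sqSet c d ⊆ P := by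
  constructor
  · intro hsub p hp
    have h1 : Prod.swap p ∈ sqSet (Prod.swap c) d := by
      rw [mem_sqSet_swap, Prod.swap_swap]; exact hp
    have := hsub h1
    simpa using this
  · intro hsub p hp
    exact hsub (mem_sqSet_swap.mp hp)

lemma blockSet_swap_subset' {b : ℤ × ℤ} {c : Pt} {d : ℝ}
    (h : blockSet b ⊆ sqSet c d) :
    blockSet (Prod.swap b) ⊆ sqSet (Prod.swap c) d := by
  rw [block_subset_sqSet_iff] at h ⊢
  simp only [Prod.fst_swap, Prod.snd_swap]
  tauto

lemma coreAux (P : Set Pt) (A : Finset (ℤ × ℤ))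
    (bL bR bB bT : ℤ × ℤ) (hL : bL ∈ A) (hR : bR ∈ A) (hB : bB ∈ A) (hT : bT ∈ A)
    (hLmin : ∀ b ∈ A, bL.1 ≤ b.1) (hRmax : ∀ b ∈ A, b.1 ≤ bR.1)
    (hBmin : ∀ b ∈ A, bB.2 ≤ b.2) (hTmax : ∀ b ∈ A, b.2 ≤ bT.2)
    (hWH : bT.2 - bB.2 ≤ bR.1 - bL.1)
    (h : ∀ b1 ∈ A, ∀ b2 ∈ A, ∃ c d, 0 < d ∧ sqSet c d ⊆ P ∧
        blockSet b1 ⊆ sqSet c d ∧ blockSet b2 ⊆ sqSet c d) :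
    ∃ c d, 0 < d ∧ sqSet c d ⊆ P ∧ ∀ b ∈ A, blockSet b ⊆ sqSet c d := by
  have hWHr : (bT.2 : ℝ) - bB.2 ≤ (bR.1 : ℝ) - bL.1 := by exact_mod_cast hWH
  have hLRr : (bL.1 : ℝ) ≤ bR.1 := by exact_mod_cast hLmin bR hR
  have hBTr : (bB.2 : ℝ) ≤ bT.2 := by exact_mod_cast hBmin bT hT
  have hBL : (bB.2 : ℝ) ≤ bL.2 := by exact_mod_cast hBmin bL hL
  have hTL : (bL.2 : ℝ) ≤ bT.2 := by exact_mod_cast hTmax bL hL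
  -- Step 1: the bounding box is inside P
  have hBox : ∀ p : Pt, (bL.1 : ℝ) ≤ p.1 → p.1 ≤ (bR.1 : ℝ) + 1 →
      (bB.2 : ℝ) ≤ p.2 → p.2 ≤ (bT.2 : ℝ) + 1 → p ∈ P := by
    intro p hx0 hx1 hy0 hy1
    obtain ⟨c1, d1, _, hs1, hb1, ht1⟩ := h bB hB bT hT
    obtain ⟨c2, d2, _, hs2, hb2, hr2⟩ := h bB hB bR hR
    obtain ⟨c3, d3, _, hs3, ht3, hr3⟩ := h bT hT bR hR
    obtain ⟨c4, d4, _, hs4, hb4, hl4⟩ := h bB hB bL hL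
    obtain ⟨c5, d5, _, hs5, ht5, hl5⟩ := h bT hT bL hL
    rw [block_subset_sqSet_iff] at hb1 ht1 hb2 hr2 ht3 hr3 hb4 hl4 ht5 hl5
    obtain ⟨hb1a, hb1b, hb1c, hb1d⟩ := hb1
    obtain ⟨ht1a, ht1b, ht1c, ht1d⟩ := ht1
    obtain ⟨hb2a, hb2b, hb2c, hb2d⟩ := hb2
    obtain ⟨hr2a, hr2b, hr2c, hr2d⟩ := hr2
    obtain ⟨ht3a, ht3b, ht3c, ht3d⟩ := ht3
    obtain ⟨hr3a, hr3b, hr3c, hr3d⟩ := hr3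
    obtain ⟨hb4a, hb4b, hb4c, hb4d⟩ := hb4
    obtain ⟨hl4a, hl4b, hl4c, hl4d⟩ := hl4
    obtain ⟨ht5a, ht5b, ht5c, ht5d⟩ := ht5
    obtain ⟨hl5a, hl5b, hl5c, hl5d⟩ := hl5
    by_cases hxm : p.1 < min ((bB.1 : ℝ)) ((bT.1 : ℝ))
    · have hmB : min ((bB.1 : ℝ)) ((bT.1 : ℝ)) ≤ (bB.1 : ℝ) := min_le_left _ _
      have hmT : min ((bB.1 : ℝ)) ((bT.1 : ℝ)) ≤ (bT.1 : ℝ) := min_le_right _ _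
      by_cases hy : p.2 ≤ (bL.2 : ℝ) + 1
      · exact hs4 (mem_sqSet.mpr ⟨⟨by linarith, by linarith⟩, by linarith, by linarith⟩)
      · push_neg at hy
        exact hs5 (mem_sqSet.mpr ⟨⟨by linarith, by linarith⟩, by linarith, by linarith⟩)
    · push_neg at hxm
      by_cases hxM : max ((bB.1 : ℝ)) ((bT.1 : ℝ)) + 1 < p.1
      · have hMB : (bB.1 : ℝ) ≤ max ((bB.1 : ℝ)) ((bT.1 : ℝ)) := le_max_left _ _
        have hMT : (bT.1 : ℝ) ≤ max ((bB.1 : ℝ)) ((bT.1 : ℝ)) := le_max_right _ _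
        by_cases hy : p.2 ≤ (bR.2 : ℝ) + 1
        · exact hs2 (mem_sqSet.mpr ⟨⟨by linarith, by linarith⟩, by linarith, by linarith⟩)
        · push_neg at hy
          exact hs3 (mem_sqSet.mpr ⟨⟨by linarith, by linarith⟩, by linarith, by linarith⟩)
      · push_neg at hxM
        have hcm : c1.1 ≤ min ((bB.1 : ℝ)) ((bT.1 : ℝ)) := le_min hb1a ht1a
        have hcM : max ((bB.1 : ℝ)) ((bT.1 : ℝ)) + 1 ≤ c1.1 + d1 := by
          rcases max_cases ((bB.1 : ℝ)) ((bT.1 : ℝ)) with ⟨hmax, _⟩ | ⟨hmax, _⟩ <;>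
            rw [hmax] <;> linarith
        exact hs1 (mem_sqSet.mpr ⟨⟨by linarith, by linarith⟩, by linarith, by linarith⟩)
  -- Step 2: build the single square from the square of the pair (bL, bR)
  obtain ⟨c, d, hd, hs, hbl, hbr⟩ := h bL hL bR hR
  rw [block_subset_sqSet_iff] at hbl hbr
  obtain ⟨ha1, ha2, ha3, ha4⟩ := hbl
  obtain ⟨hr1, hr2, hr3, hr4⟩ := hbr
  have hdW : (bR.1 : ℝ) + 1 - bL.1 ≤ d := by linarith
  by_cases hcase1 : c.2 ≤ (bB.2 : ℝ) ∧ (bT.2 : ℝ) + 1 ≤ c.2 + d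
  · refine ⟨c, d, hd, hs, ?_⟩
    intro b hb
    have hx : (bL.1 : ℝ) ≤ b.1 := by exact_mod_cast hLmin b hb
    have hx' : (b.1 : ℝ) ≤ bR.1 := by exact_mod_cast hRmax b hb
    have hy : (bB.2 : ℝ) ≤ b.2 := by exact_mod_cast hBmin b hb
    have hy' : (b.2 : ℝ) ≤ bT.2 := by exact_mod_cast hTmax b hb
    rw [block_subset_sqSet_iff]
    exact ⟨by linarith [hcase1.1], by linarith, by linarith [hcase1.1], by linarith [hcase1.2]⟩
  · by_cases hcase2 : c.2 + d < (bT.2 : ℝ) + 1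
    · -- top sticks out: take the square with top edge at y1
      refine ⟨((bL.1 : ℝ), (bT.2 : ℝ) + 1 - ((bR.1 : ℝ) + 1 - bL.1)),
        (bR.1 : ℝ) + 1 - bL.1, by linarith, ?_, ?_⟩
      · intro p hp
        rw [mem_sqSet'] at hp
        obtain ⟨⟨hp1, hp2⟩, hp3, hp4⟩ := hp
        by_cases hyp : (bB.2 : ℝ) ≤ p.2
        · exact hBox p (by linarith) (by linarith) hyp (by linarith)
        · push_neg at hyp
          exact hs (mem_sqSet.mpr ⟨⟨by linarith, by linarith⟩, by linarith, by linarith⟩)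
      · intro b hb
        have hx : (bL.1 : ℝ) ≤ b.1 := by exact_mod_cast hLmin b hb
        have hx' : (b.1 : ℝ) ≤ bR.1 := by exact_mod_cast hRmax b hb
        have hy : (bB.2 : ℝ) ≤ b.2 := by exact_mod_cast hBmin b hb
        have hy' : (b.2 : ℝ) ≤ bT.2 := by exact_mod_cast hTmax b hb
        rw [block_subset_sqSet_iff']
        exact ⟨by linarith, by linarith, by linarith, by linarith⟩
    · -- bottom sticks out: take the square with bottom edge at y0
      push_neg at hcase2
      have hy0c : (bB.2 : ℝ) < c.2 := by
        by_contra h'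
        push_neg at h'
        exact hcase1 ⟨h', hcase2⟩
      refine ⟨((bL.1 : ℝ), (bB.2 : ℝ)), (bR.1 : ℝ) + 1 - bL.1, by linarith, ?_, ?_⟩
      · intro p hp
        rw [mem_sqSet'] at hp
        obtain ⟨⟨hp1, hp2⟩, hp3, hp4⟩ := hp
        by_cases hyp : p.2 ≤ (bT.2 : ℝ) + 1
        · exact hBox p (by linarith) (by linarith) (by linarith) hyp
        · push_neg at hyp
          exact hs (mem_sqSet.mpr ⟨⟨by linarith, by linarith⟩, by linarith, by linarith⟩)
      · intro b hb
        have hx : (bL.1 : ℝ) ≤ b.1 := by exact_mod_cast hLmin b hb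
        have hx' : (b.1 : ℝ) ≤ bR.1 := by exact_mod_cast hRmax b hb
        have hy : (bB.2 : ℝ) ≤ b.2 := by exact_mod_cast hBmin b hb
        have hy' : (b.2 : ℝ) ≤ bT.2 := by exact_mod_cast hTmax b hb
        rw [block_subset_sqSet_iff']
        exact ⟨by linarith, by linarith, by linarith, by linarith⟩

lemma core (P : Set Pt) (A : Finset (ℤ × ℤ)) (hA : A.Nonempty)
    (h : ∀ b1 ∈ A, ∀ b2 ∈ A, ∃ c d, 0 < d ∧ sqSet c d ⊆ P ∧
        blockSet b1 ⊆ sqSet c d ∧ blockSet b2 ⊆ sqSet c d) :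
    ∃ c d, 0 < d ∧ sqSet c d ⊆ P ∧ ∀ b ∈ A, blockSet b ⊆ sqSet c d := by
  obtain ⟨bL, hL, hLmin⟩ := A.exists_min_image Prod.fst hA
  obtain ⟨bR, hR, hRmax⟩ := A.exists_max_image Prod.fst hA
  obtain ⟨bB, hB, hBmin⟩ := A.exists_min_image Prod.snd hA
  obtain ⟨bT, hT, hTmax⟩ := A.exists_max_image Prod.snd hA
  by_cases hWH : bT.2 - bB.2 ≤ bR.1 - bL.1
  · exact coreAux P A bL bR bB bT hL hR hB hT hLmin hRmax hBmin hTmax hWH h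
  · push_neg at hWH
    have h' : ∀ b1 ∈ A.image Prod.swap, ∀ b2 ∈ A.image Prod.swap,
        ∃ c d, 0 < d ∧ sqSet c d ⊆ Prod.swap ⁻¹' P ∧
          blockSet b1 ⊆ sqSet c d ∧ blockSet b2 ⊆ sqSet c d := by
      intro b1 hb1 b2 hb2
      simp only [Finset.mem_image] at hb1 hb2
      obtain ⟨a1, ha1, rfl⟩ := hb1
      obtain ⟨a2, ha2, rfl⟩ := hb2
      obtain ⟨c, d, hd, hsub, h1, h2⟩ := h a1 ha1 a2 ha2
      exact ⟨Prod.swap c, d, hd, sqSet_swap_subset.mpr hsub,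
        blockSet_swap_subset' h1, blockSet_swap_subset' h2⟩
    have hLmin' : ∀ b ∈ A.image Prod.swap, bB.swap.1 ≤ b.1 := by
      intro b hb
      simp only [Finset.mem_image] at hb
      obtain ⟨a, ha, rfl⟩ := hb
      simpa using hBmin a ha
    have hRmax' : ∀ b ∈ A.image Prod.swap, b.1 ≤ bT.swap.1 := by
      intro b hb
      simp only [Finset.mem_image] at hb
      obtain ⟨a, ha, rfl⟩ := hb
      simpa using hTmax a ha
    have hBmin' : ∀ b ∈ A.image Prod.swap, bL.swap.2 ≤ b.2 := by
      intro b hb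
      simp only [Finset.mem_image] at hb
      obtain ⟨a, ha, rfl⟩ := hb
      simpa using hLmin a ha
    have hTmax' : ∀ b ∈ A.image Prod.swap, b.2 ≤ bR.swap.2 := by
      intro b hb
      simp only [Finset.mem_image] at hb
      obtain ⟨a, ha, rfl⟩ := hb
      simpa using hRmax a ha
    have hWH' : bR.swap.2 - bL.swap.2 ≤ bT.swap.1 - bB.swap.1 := by
      simp only [Prod.fst_swap, Prod.snd_swap]
      omega
    obtain ⟨c, d, hd, hs, hcov⟩ := coreAux (Prod.swap ⁻¹' P) (A.image Prod.swap)
      bB.swap bT.swap bL.swap bR.swap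
      (Finset.mem_image_of_mem _ hB) (Finset.mem_image_of_mem _ hT)
      (Finset.mem_image_of_mem _ hL) (Finset.mem_image_of_mem _ hR)
      hLmin' hRmax' hBmin' hTmax' hWH' h'
    refine ⟨Prod.swap c, d, hd, ?_, ?_⟩
    · exact (sqSet_swap_subset (c := Prod.swap c)).mp (by simpa using hs)
    · intro b hb
      have h1 := hcov (Prod.swap b) (Finset.mem_image_of_mem _ hb)
      have h2 := blockSet_swap_subset' h1
      simpa using h2

/-- A (nonempty) set `A` of blocks of an orthogonal polygon with integer vertices can
be covered by a single axis-parallel square contained in `P` if and only if any two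
blocks of `A` can (i.e. iff `A` induces a clique in the associated graph `G(P)`). -/
theorem square_cover_iff_clique {n : ℕ} [NeZero n] (Q : OrthoPoly n)
    (hint : ∀ i, ∃ a b : ℤ, Q.v i = ((a : ℝ), (b : ℝ)))
    (A : Finset (ℤ × ℤ)) (hA : A.Nonempty)
    (hblk : ∀ b ∈ A, blockSet b ⊆ Q.P) :
    (∃ (c : Pt) (d : ℝ), 0 < d ∧ sqSet c d ⊆ Q.P ∧ ∀ b ∈ A, blockSet b ⊆ sqSet c d) ↔
      (∀ b1 ∈ A, ∀ b2 ∈ A, ∃ (c : Pt) (d : ℝ), 0 < d ∧ sqSet c d ⊆ Q.P ∧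
        blockSet b1 ⊆ sqSet c d ∧ blockSet b2 ⊆ sqSet c d) := by
  constructor
  · rintro ⟨c, d, hd, hsub, hcov⟩ b1 hb1 b2 hb2
    exact ⟨c, d, hd, hsub, hcov b1 hb1, hcov b2 hb2⟩
  · intro h
    exact core Q.P A hA h
end

section
/- Let P be an orthogonal polygon, let 𝓡 be a partial solution (a set of rec-packs extendable to a minimum covering of P), and let S be an unambiguous square given 𝓡, i.e., a maximal square covering some simplicial node p of the graph G^𝓡(P) together with all of p's neighbours in G^𝓡(P). Then 𝓡 ∪ {S} is also a partial solution. -/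
open Set

/-- A block: the unit lattice square with the given bottom-left lattice corner. -/
abbrev Blk := ℤ × ℤ

/-- An axis-parallel lattice square: bottom-left corner block and side length. -/
abbrev SqZ := Blk × ℕ

/-- The set of blocks covered by the square `s`. -/
def SqZ.blk (s : SqZ) : Set Blk :=
  {p | s.1.1 ≤ p.1 ∧ p.1 < s.1.1 + (s.2 : ℤ) ∧ s.1.2 ≤ p.2 ∧ p.2 < s.1.2 + (s.2 : ℤ)}

/-- A rec-pack: corner block, width `t`, strength `η`, and orientation. -/
abbrev RPk := Blk × ℕ × ℕ × Bool

def RPk.t (R : RPk) : ℕ := R.2.1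
def RPk.str (R : RPk) : ℕ := R.2.2.1

/-- The extraction of a rec-pack: its `η` side-by-side `t × t` squares. -/
def RPk.ext (R : RPk) : Finset SqZ :=
  (Finset.range (RPk.str R)).image fun i : ℕ =>
    (if R.2.2.2 then (R.1.1 + (i : ℤ) * (RPk.t R : ℤ), R.1.2)
     else (R.1.1, R.1.2 + (i : ℤ) * (RPk.t R : ℤ)), RPk.t R)

/-- The extraction of a set of rec-packs. -/
def extSet (𝓡 : Finset RPk) : Finset SqZ := 𝓡.biUnion RPk.ext

/-- The set of blocks covered by a finite set of squares. -/
def coveredBy (F : Finset SqZ) : Set Blk := ⋃ s ∈ F, SqZ.blk s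

/-- A valid square: nondegenerate and contained in `P`. -/
def ValidSq (P : Set Blk) (s : SqZ) : Prop := 0 < s.2 ∧ SqZ.blk s ⊆ P

def IsCovering (P : Set Blk) (F : Finset SqZ) : Prop :=
  (∀ s ∈ F, ValidSq P s) ∧ coveredBy F = P

def IsMinCovering (P : Set Blk) (F : Finset SqZ) : Prop :=
  IsCovering P F ∧ ∀ F' : Finset SqZ, IsCovering P F' → F.card ≤ F'.card

/-- A set of rec-packs is a minimum covering of `P` if its extraction is a minimum
square covering of `P` and the extractions are pairwise disjoint. -/
def IsMinRPCovering (P : Set Blk) (𝓡 : Finset RPk) : Prop :=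
  IsMinCovering P (extSet 𝓡) ∧
    ∀ R1 ∈ 𝓡, ∀ R2 ∈ 𝓡, R1 ≠ R2 → RPk.ext R1 ∩ RPk.ext R2 = ∅

/-- A partial solution: a set of rec-packs extendable to a minimum covering of `P`. -/
def PartialSol (P : Set Blk) (𝓡 : Finset RPk) : Prop :=
  ∃ 𝓡' : Finset RPk, 𝓡 ⊆ 𝓡' ∧ IsMinRPCovering P 𝓡'

/-- The blocks covered by the rec-packs of `𝓡`. -/
def rpCovered (𝓡 : Finset RPk) : Set Blk := coveredBy (extSet 𝓡)

/-- Adjacency in `G^𝓡(P)`: two distinct uncovered blocks coverable by one valid square. -/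
def AdjR (P : Set Blk) (𝓡 : Finset RPk) (p q : Blk) : Prop :=
  p ≠ q ∧ p ∈ P \ rpCovered 𝓡 ∧ q ∈ P \ rpCovered 𝓡 ∧
    ∃ s : SqZ, ValidSq P s ∧ p ∈ SqZ.blk s ∧ q ∈ SqZ.blk s

/-- A simplicial node of `G^𝓡(P)`: its closed neighbourhood induces a clique. -/
def SimplicialBlk (P : Set Blk) (𝓡 : Finset RPk) (p : Blk) : Prop :=
  p ∈ P \ rpCovered 𝓡 ∧
    ∀ q r : Blk, AdjR P 𝓡 p q → AdjR P 𝓡 p r → q ≠ r → AdjR P 𝓡 q r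

/-- A maximal square: a valid square not contained in any strictly larger valid square. -/
def MaximalSqZ (P : Set Blk) (s : SqZ) : Prop :=
  ValidSq P s ∧ ¬ ∃ s' : SqZ, s.2 < s'.2 ∧ ValidSq P s' ∧ SqZ.blk s ⊆ SqZ.blk s'

/-- `S` is an unambiguous square given a partial solution `𝓡`: a maximal square
covering some simplicial node `p` of `G^𝓡(P)` together with all of its neighbours. -/
def Unambiguous (P : Set Blk) (𝓡 : Finset RPk) (S : SqZ) : Prop :=
  MaximalSqZ P S ∧ ∃ p : Blk, SimplicialBlk P 𝓡 p ∧ p ∈ SqZ.blk S ∧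
    ∀ q : Blk, AdjR P 𝓡 p q → q ∈ SqZ.blk S

/-- A square viewed as a trivial rec-pack (strength 1). -/
def toRP (s : SqZ) : RPk := (s.1, s.2, 1, true)

/-- Rook adjacency of blocks. -/
def adj4 (p q : Blk) : Prop := (p.1 - q.1).natAbs + (p.2 - q.2).natAbs = 1

/-- A set of blocks is connected (under rook adjacency). -/
def ConnSet (A : Set Blk) : Prop :=
  ∀ p ∈ A, ∀ q ∈ A, Relation.ReflTransGen (fun a b => adj4 a b ∧ a ∈ A ∧ b ∈ A) p q


/-!
In a minimum covering extending `𝓡`, the simplicial block `p` lies in some square `s`. Every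
block of the valid square `s` is covered by `𝓡`, is `p`, or is a neighbour of `p` in `G^𝓡(P)`,
so it lies in `S`. Swapping `s` for `S` therefore yields a covering that is no larger; keeping the
rec-packs of `𝓡` and splitting every other square into a rec-pack of its own makes it a minimum
rec-pack covering containing `𝓡 ∪ {S}`.
-/

@[simp]
lemma ext_toRP (s : SqZ) : RPk.ext (toRP s) = {s} := by
  simp [RPk.ext, toRP, RPk.str, RPk.t]

lemma mem_coveredBy {F : Finset SqZ} {x : Blk} :
    x ∈ coveredBy F ↔ ∃ s ∈ F, x ∈ SqZ.blk s := by
  simp [coveredBy]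

lemma coveredBy_mono {F G : Finset SqZ} (h : F ⊆ G) : coveredBy F ⊆ coveredBy G :=
  Set.biUnion_subset_biUnion_left (Finset.coe_subset.2 h)

lemma coveredBy_insert (S : SqZ) (F : Finset SqZ) :
    coveredBy (insert S F) = SqZ.blk S ∪ coveredBy F := by
  simp [coveredBy]

lemma extSet_mono {A B : Finset RPk} (h : A ⊆ B) : extSet A ⊆ extSet B :=
  Finset.biUnion_subset_biUnion_of_subset_left _ h

lemma extSet_union (A B : Finset RPk) : extSet (A ∪ B) = extSet A ∪ extSet B :=
  Finset.union_biUnion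

lemma extSet_image_toRP (F : Finset SqZ) : extSet (F.image toRP) = F := by
  simp only [extSet, Finset.image_biUnion, ext_toRP, Finset.biUnion_singleton_eq_self]

lemma isMinRPCovering_iff {P : Set Blk} {𝓡 : Finset RPk} :
    IsMinRPCovering P 𝓡 ↔
      IsMinCovering P (extSet 𝓡) ∧ (𝓡 : Set RPk).PairwiseDisjoint RPk.ext := by
  simp [IsMinRPCovering, Set.PairwiseDisjoint, Set.Pairwise, Function.onFun,
    Finset.disjoint_iff_inter_eq_empty]

lemma pairwiseDisjoint_image_toRP (F : Finset SqZ) :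
    ((F.image toRP : Finset RPk) : Set RPk).PairwiseDisjoint RPk.ext := by
  rintro _ hR₁ _ hR₂ hne
  obtain ⟨u, -, rfl⟩ := Finset.mem_image.1 hR₁
  obtain ⟨v, -, rfl⟩ := Finset.mem_image.1 hR₂
  simpa [Function.onFun] using fun huv : u = v => hne (congrArg toRP huv)

lemma pairwiseDisjoint_union_image_toRP {𝓡 : Finset RPk} {F : Finset SqZ}
    (h𝓡 : (𝓡 : Set RPk).PairwiseDisjoint RPk.ext) (hF : Disjoint (extSet 𝓡) F) :
    ((𝓡 ∪ F.image toRP : Finset RPk) : Set RPk).PairwiseDisjoint RPk.ext := by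
  rw [Finset.coe_union]
  refine h𝓡.union (pairwiseDisjoint_image_toRP F) fun R hR _ hR' _ => ?_
  obtain ⟨u, hu, rfl⟩ := Finset.mem_image.1 hR'
  rw [ext_toRP, Finset.disjoint_singleton_right]
  exact fun huR => Finset.disjoint_left.1 hF (Finset.mem_biUnion.2 ⟨R, hR, huR⟩) hu

lemma isCovering_iff_subset {P : Set Blk} {F : Finset SqZ} :
    IsCovering P F ↔ (∀ s ∈ F, ValidSq P s) ∧ P ⊆ coveredBy F := by
  refine and_congr_right fun hval => ⟨fun h => h.ge, fun h => h.antisymm' ?_⟩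
  intro x hx
  obtain ⟨s, hs, hxs⟩ := mem_coveredBy.1 hx
  exact (hval s hs).2 hxs

lemma IsCovering.exchange {P : Set Blk} {F : Finset SqZ} {s S : SqZ} (hF : IsCovering P F)
    (hs : s ∈ F) (hS : ValidSq P S) (hsub : SqZ.blk s ⊆ SqZ.blk S ∪ coveredBy (F.erase s)) :
    IsCovering P (insert S (F.erase s)) := by
  refine isCovering_iff_subset.2 ⟨?_, ?_⟩
  · exact Finset.forall_mem_insert _ _ _ |>.2 ⟨hS, fun u hu => hF.1 u (Finset.mem_of_mem_erase hu)⟩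
  · rw [← hF.2, coveredBy_insert]
    intro x hx
    obtain ⟨u, hu, hxu⟩ := mem_coveredBy.1 hx
    rcases eq_or_ne u s with rfl | hus
    · exact hsub hxu
    · exact Or.inr (mem_coveredBy.2 ⟨u, Finset.mem_erase.2 ⟨hus, hu⟩, hxu⟩)

lemma IsMinCovering.of_card_le {P : Set Blk} {F G : Finset SqZ} (hF : IsMinCovering P F)
    (hG : IsCovering P G) (hle : G.card ≤ F.card) : IsMinCovering P G :=
  ⟨hG, fun F' hF' => hle.trans (hF.2 F' hF')⟩

theorem PartialSol.insert_toRP {P : Set Blk} {𝓡 : Finset RPk} {S : SqZ} {p : Blk}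
    (h𝓡 : PartialSol P 𝓡) (hS : ValidSq P S) (hp : p ∈ P \ rpCovered 𝓡) (hpS : p ∈ SqZ.blk S)
    (hexch : ∀ s, ValidSq P s → p ∈ SqZ.blk s → SqZ.blk s ⊆ SqZ.blk S ∪ rpCovered 𝓡) :
    PartialSol P (insert (toRP S) 𝓡) := by
  obtain ⟨𝓡', hsub, h𝓡'⟩ := h𝓡
  obtain ⟨hmin, hdisj⟩ := isMinRPCovering_iff.1 h𝓡'
  set F := extSet 𝓡'
  set E := extSet 𝓡
  obtain ⟨s, hsF, hps⟩ := mem_coveredBy.1 (hmin.1.2.symm ▸ hp.1 : p ∈ coveredBy F)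
  have hsE : s ∉ E := fun h => hp.2 (mem_coveredBy.2 ⟨s, h, hps⟩)
  have hSE : S ∉ E := fun h => hp.2 (mem_coveredBy.2 ⟨S, h, hpS⟩)
  have hEs : E ⊆ F.erase s := fun u hu =>
    Finset.mem_erase.2 ⟨ne_of_mem_of_not_mem hu hsE, extSet_mono hsub hu⟩
  set G := insert S (F.erase s)
  have hG : IsMinCovering P G := by
    refine hmin.of_card_le (hmin.1.exchange hsF hS ?_) ?_
    · exact (hexch s (hmin.1.1 s hsF) hps).trans
        (Set.union_subset_union_right _ (coveredBy_mono hEs))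
    · exact (Finset.card_insert_le _ _).trans (Finset.card_erase_add_one hsF).le
  refine ⟨𝓡 ∪ (G \ E).image toRP, ?_, ?_⟩
  · refine Finset.insert_subset (Finset.mem_union_right _ ?_) Finset.subset_union_left
    exact Finset.mem_image_of_mem _ (Finset.mem_sdiff.2 ⟨Finset.mem_insert_self _ _, hSE⟩)
  · rw [isMinRPCovering_iff, extSet_union, extSet_image_toRP, Finset.union_sdiff_self_eq_union,
      Finset.union_eq_right.2 (hEs.trans (Finset.subset_insert _ _))]
    exact ⟨hG, pairwiseDisjoint_union_image_toRP (hdisj.subset (Finset.coe_subset.2 hsub))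
      Finset.disjoint_sdiff⟩

lemma blk_subset_blk_union_rpCovered {P : Set Blk} {𝓡 : Finset RPk} {S s : SqZ} {p : Blk}
    (hp : p ∈ P \ rpCovered 𝓡) (hpS : p ∈ SqZ.blk S)
    (hnbr : ∀ q, AdjR P 𝓡 p q → q ∈ SqZ.blk S) (hs : ValidSq P s) (hps : p ∈ SqZ.blk s) :
    SqZ.blk s ⊆ SqZ.blk S ∪ rpCovered 𝓡 := by
  intro q hq
  by_cases hq𝓡 : q ∈ rpCovered 𝓡
  · exact Or.inr hq𝓡
  rcases eq_or_ne q p with rfl | hqp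
  · exact Or.inl hpS
  · exact Or.inl (hnbr q ⟨hqp.symm, hp, ⟨hs.2 hq, hq𝓡⟩, s, hs, hps, hq⟩)

theorem unambiguous_extends_partial_solution_general (P : Set Blk)
    (𝓡 : Finset RPk) (hPS : PartialSol P 𝓡)
    (S : SqZ) (hS : Unambiguous P 𝓡 S) :
    PartialSol P (insert (toRP S) 𝓡) := by
  obtain ⟨⟨hSval, -⟩, p, ⟨hp, -⟩, hpS, hnbr⟩ := hS
  exact hPS.insert_toRP hSval hp hpS fun s hs hps =>
    blk_subset_blk_union_rpCovered hp hpS hnbr hs hps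

/-- If `𝓡` is a partial solution for an orthogonal polygon `P` without holes (a
finite, connected set of blocks with connected complement) and `S` is an unambiguous
square given `𝓡`, then `𝓡 ∪ {S}` is also a partial solution. -/
theorem unambiguous_extends_partial_solution (P : Set Blk)
    (hfin : P.Finite) (hne : P.Nonempty) (hconn : ConnSet P) (hnohole : ConnSet Pᶜ)
    (𝓡 : Finset RPk) (hPS : PartialSol P 𝓡)
    (S : SqZ) (hS : Unambiguous P 𝓡 S) :
    PartialSol P (insert (toRP S) 𝓡) :=
  unambiguous_extends_partial_solution_general P 𝓡 hPS S hS
end
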